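/- Let $F_k(\theta) = e^{ik(\theta(y)-\theta(x))}$ for fixed distinct lattice sites $x, y$ and $k \ne 0$, viewed as a function of $\theta \in \mathbb{R}^n$ (coordinates indexed by lattice sites). Suppose $H \in C^2(\mathbb{R}^n)$ is uniformly convex with $e^{-H}$ integrable, and $\big|\frac{\partial^2 H}{\partial \theta(x)^2}\big| \le B$ pointwise. Then $|\langle F_k \rangle_H| \le \frac{2B}{k^2}$. -/

import Mathlib

/-!
Along the `x`-axis `F_k` is an eigenfunction of `∂ = ∂/∂θ(x)` with eigenvalue `-ik`, so two
integrations by parts give `k² ∫ F_k e^{-H} = ∫ F_k (∂²H - (∂H)²) e^{-H}`, and a third one gives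
`∫ (∂H)² e^{-H} = ∫ ∂²H e^{-H} ≤ B ∫ e^{-H}`; hence `k² |∫ F_k e^{-H}| ≤ 2B ∫ e^{-H}`.
The integrations by parts are carried out on each line parallel to the `x`-axis, where uniform
convexity gives Gaussian decay of `e^{-H}` and linear growth of `∂H`, and the line estimates are
summed by Fubini.
-/

open MeasureTheory Real
open Complex (I)
open scoped Complex

section UniformConvexity

variable {h h' h'' : ℝ → ℝ} {δ : ℝ}

lemma quadratic_le_of_le_deriv2 (hd1 : ∀ t, HasDerivAt h (h' t) t)
    (hd2 : ∀ t, HasDerivAt h' (h'' t) t) (hlow : ∀ t, δ ≤ h'' t) (t : ℝ) :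
    h 0 + h' 0 * t + δ / 2 * t ^ 2 ≤ h t := by
  set g : ℝ → ℝ := fun s => h s - δ / 2 * s ^ 2
  have hg1 (s : ℝ) : HasDerivAt g (h' s - δ * s) s :=
    (hd1 s).sub (((hasDerivAt_pow 2 s).const_mul (δ / 2)).congr_deriv (by push_cast; ring))
  have hg2 (s : ℝ) : HasDerivAt (fun s => h' s - δ * s) (h'' s - δ) s :=
    (hd2 s).sub (((hasDerivAt_id s).const_mul δ).congr_deriv (mul_one δ))
  have hconvex : ConvexOn ℝ Set.univ g :=
    convexOn_of_hasDerivWithinAt2_nonneg convex_univ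
      (fun s _ => (hg1 s).continuousAt.continuousWithinAt)
      (fun s _ => (hg1 s).hasDerivWithinAt) (fun s _ => (hg2 s).hasDerivWithinAt)
      (fun s _ => sub_nonneg.2 (hlow s))
  have tangent : g 0 + h' 0 * t ≤ g t := by
    rcases lt_trichotomy t 0 with ht | rfl | ht
    · have := hconvex.slope_le_of_hasDerivAt trivial trivial ht (by simpa using hg1 0)
      rw [slope_def_field, div_le_iff₀ (by linarith)] at this
      linarith
    · simp
    · have := hconvex.le_slope_of_hasDerivAt trivial trivial ht (by simpa using hg1 0)
      rw [slope_def_field, le_div_iff₀ (by linarith)] at this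
      linarith
  simp only [g] at tangent
  linarith

lemma exp_neg_le_gaussian_of_le_deriv2 (hδ : 0 < δ) (hd1 : ∀ t, HasDerivAt h (h' t) t)
    (hd2 : ∀ t, HasDerivAt h' (h'' t) t) (hlow : ∀ t, δ ≤ h'' t) (t : ℝ) :
    exp (-h t) ≤ exp (-h 0 + h' 0 ^ 2 / δ) * exp (-(δ / 4) * t ^ 2) := by
  rw [← exp_add, exp_le_exp]
  have hquad := quadratic_le_of_le_deriv2 hd1 hd2 hlow t
  have hlinear : -(h' 0 * t) ≤ δ / 4 * t ^ 2 + h' 0 ^ 2 / δ := by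
    have hsq : δ / 4 * t ^ 2 + h' 0 ^ 2 / δ + h' 0 * t = (δ * t / 2 + h' 0) ^ 2 / δ := by
      field_simp
      ring
    rw [← sub_nonneg, sub_neg_eq_add, hsq]
    positivity
  linarith

lemma integrable_exp_neg_of_le_deriv2 (hδ : 0 < δ) (hd1 : ∀ t, HasDerivAt h (h' t) t)
    (hd2 : ∀ t, HasDerivAt h' (h'' t) t) (hlow : ∀ t, δ ≤ h'' t) :
    Integrable fun t => exp (-h t) := by
  have hh : Continuous h := Differentiable.continuous fun t => (hd1 t).differentiableAt
  refine ((integrable_exp_neg_mul_sq (by positivity : 0 < δ / 4)).const_mul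
    (exp (-h 0 + h' 0 ^ 2 / δ))).mono' (continuous_exp.comp hh.neg).aestronglyMeasurable
    (ae_of_all _ fun t => ?_)
  rw [norm_of_nonneg (exp_pos _).le]
  exact exp_neg_le_gaussian_of_le_deriv2 hδ hd1 hd2 hlow t

lemma integrable_sq_deriv_mul_exp_neg_of_le_deriv2 {B : ℝ} (hδ : 0 < δ)
    (hd1 : ∀ t, HasDerivAt h (h' t) t) (hd2 : ∀ t, HasDerivAt h' (h'' t) t)
    (hlow : ∀ t, δ ≤ h'' t) (hupp : ∀ t, |h'' t| ≤ B) :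
    Integrable fun t => h' t ^ 2 * exp (-h t) := by
  set C := exp (-h 0 + h' 0 ^ 2 / δ)
  have hc : 0 < δ / 4 := by positivity
  have hgauss2 : Integrable fun t : ℝ => t ^ 2 * exp (-(δ / 4) * t ^ 2) := by
    simpa only [rpow_two] using integrable_rpow_mul_exp_neg_mul_sq hc (s := 2) (by norm_num)
  have hh : Continuous h := Differentiable.continuous fun t => (hd1 t).differentiableAt
  have hh' : Continuous h' := Differentiable.continuous fun t => (hd2 t).differentiableAt
  have hlip (t : ℝ) : |h' t - h' 0| ≤ B * |t| := by
    simpa using Convex.norm_image_sub_le_of_norm_hasDerivWithin_le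
      (fun s _ => (hd2 s).hasDerivWithinAt) (fun s _ => hupp s) convex_univ
      (Set.mem_univ 0) (Set.mem_univ t)
  refine (((integrable_exp_neg_mul_sq hc).const_mul (2 * h' 0 ^ 2 * C)).add
    (hgauss2.const_mul (2 * B ^ 2 * C))).mono'
    ((hh'.pow 2).mul (continuous_exp.comp hh.neg)).aestronglyMeasurable
    (ae_of_all _ fun t => ?_)
  have hsq : h' t ^ 2 ≤ 2 * h' 0 ^ 2 + 2 * B ^ 2 * t ^ 2 := by
    have := abs_le.1 (hlip t)
    nlinarith [sq_nonneg (h' t - 2 * h' 0), abs_nonneg t, sq_abs t, abs_mul_abs_self t]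
  rw [norm_of_nonneg (by positivity)]
  calc h' t ^ 2 * exp (-h t)
      ≤ (2 * h' 0 ^ 2 + 2 * B ^ 2 * t ^ 2) * (C * exp (-(δ / 4) * t ^ 2)) :=
        mul_le_mul hsq (exp_neg_le_gaussian_of_le_deriv2 hδ hd1 hd2 hlow t) (exp_pos _).le
          (by positivity)
    _ = _ := by simp only [Pi.add_apply]; ring

end UniformConvexity

lemma norm_cexp_neg_I_mul (k t : ℝ) : ‖cexp (-(I * k * t))‖ = 1 := by
  simp [Complex.norm_exp]

lemma integrable_cexp_neg_I_mul {g : ℝ → ℂ} (k : ℝ) (hg : Integrable g) :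
    Integrable fun t : ℝ => cexp (-(I * k * t)) * g t :=
  hg.bdd_mul (by fun_prop) (ae_of_all _ fun t => (norm_cexp_neg_I_mul k t).le)

lemma integral_cexp_neg_I_mul_deriv {g g' : ℝ → ℂ} (k : ℝ) (hg : ∀ t, HasDerivAt g (g' t) t)
    (hgi : Integrable g) (hg'i : Integrable g') :
    ∫ t : ℝ, cexp (-(I * k * t)) * g' t = I * k * ∫ t : ℝ, cexp (-(I * k * t)) * g t := by
  have hφ (t : ℝ) : HasDerivAt (fun t : ℝ => cexp (-(I * k * t)))
      (-(I * k) * cexp (-(I * k * t))) t := by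
    simpa [mul_comm] using ((hasDerivAt_id (t : ℂ)).const_mul (I * k)).neg.cexp.comp_ofReal
  rw [integral_mul_deriv_eq_deriv_mul_of_integrable (fun t _ => hφ t) (fun t _ => hg t)
    (integrable_cexp_neg_I_mul k hg'i)
    (by simpa only [Pi.mul_def, mul_assoc] using
      (integrable_cexp_neg_I_mul k hgi).const_mul (-(I * k)))
    (integrable_cexp_neg_I_mul k hgi), ← integral_const_mul]
  simp only [mul_assoc, neg_mul, integral_neg, neg_neg]

lemma norm_integral_cexp_mul_exp_neg_le {h h' h'' : ℝ → ℝ} {B k : ℝ} (hk : k ≠ 0)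
    (hd1 : ∀ t, HasDerivAt h (h' t) t) (hd2 : ∀ t, HasDerivAt h' (h'' t) t)
    (hupp : ∀ t, |h'' t| ≤ B) (hw : Integrable fun t => exp (-h t))
    (hw2 : Integrable fun t => h' t ^ 2 * exp (-h t)) :
    ‖∫ t : ℝ, cexp (-(I * k * t)) * exp (-h t)‖ ≤ 2 * B / k ^ 2 * ∫ t, exp (-h t) := by
  set w := fun t => exp (-h t)
  have hwpos (t : ℝ) : 0 < w t := exp_pos _
  have hw' (t : ℝ) : HasDerivAt w (-(h' t * w t)) t :=
    (hd1 t).neg.exp.congr_deriv (by simp only [w, Pi.neg_apply]; ring)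
  have hh'w (t : ℝ) : HasDerivAt (fun t => h' t * w t) (h'' t * w t - h' t ^ 2 * w t) t :=
    ((hd2 t).mul (hw' t)).congr_deriv (by ring)
  have hh'' : Measurable h'' := funext (fun t => (hd2 t).deriv) ▸ measurable_deriv h'
  have hw1 : Integrable fun t => h' t * w t := by
    refine (hw.add hw2).mono'
      ((Differentiable.continuous fun t => (hd2 t).differentiableAt).aestronglyMeasurable.mul
        hw.aestronglyMeasurable) (ae_of_all _ fun t => ?_)
    have : |h' t| ≤ 1 + h' t ^ 2 := by nlinarith [sq_abs (h' t), sq_nonneg (|h' t| - 1)]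
    rw [norm_mul, norm_of_nonneg (hwpos t).le, norm_eq_abs, Pi.add_apply]
    nlinarith [hwpos t]
  have hw3 : Integrable fun t => h'' t * w t :=
    (hw.const_mul B).mono' (hh''.aestronglyMeasurable.mul hw.aestronglyMeasurable)
      (ae_of_all _ fun t => by
        rw [norm_mul, norm_of_nonneg (hwpos t).le]
        exact mul_le_mul_of_nonneg_right (hupp t) (hwpos t).le)
  have hfirst := integral_cexp_neg_I_mul_deriv k (fun t => (hw' t).ofReal_comp) hw.ofReal
    hw1.neg.ofReal
  simp only [Complex.ofReal_neg, mul_neg, integral_neg] at hfirst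
  have hsecond : ((k : ℂ) ^ 2 * ∫ t : ℝ, cexp (-(I * k * t)) * w t)
      = ∫ t : ℝ, cexp (-(I * k * t)) * ↑(h'' t * w t - h' t ^ 2 * w t) := by
    rw [integral_cexp_neg_I_mul_deriv k (fun t => (hh'w t).ofReal_comp) hw1.ofReal
      (hw3.sub hw2).ofReal]
    linear_combination (↑k * I) * hfirst + ↑k ^ 2 * (∫ t : ℝ, cexp (-(I * k * t)) * w t) *
      Complex.I_sq
  have hsq_eq_deriv2 : ∫ t, h' t ^ 2 * w t = ∫ t, h'' t * w t := by
    have := integral_cexp_neg_I_mul_deriv 0 (fun t => (hh'w t).ofReal_comp) hw1.ofReal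
      (hw3.sub hw2).ofReal
    simp only [Complex.ofReal_zero, mul_zero, zero_mul, neg_zero, Complex.exp_zero, one_mul,
      integral_complex_ofReal, Complex.ofReal_eq_zero] at this
    rw [integral_sub hw3 hw2] at this
    linarith
  have hbound : ‖∫ t : ℝ, cexp (-(I * k * t)) * ↑(h'' t * w t - h' t ^ 2 * w t)‖
      ≤ ∫ t, (B * w t + h' t ^ 2 * w t) := by
    refine norm_integral_le_of_norm_le ((hw.const_mul B).add hw2) (ae_of_all _ fun t => ?_)
    rw [norm_mul, norm_cexp_neg_I_mul, one_mul, Complex.norm_real, norm_eq_abs, ← sub_mul,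
      abs_mul, abs_of_pos (hwpos t), ← add_mul]
    exact mul_le_mul_of_nonneg_right
      ((abs_sub _ _).trans (by rw [abs_sq]; linarith [hupp t])) (hwpos t).le
  have hB : ∫ t, h'' t * w t ≤ ∫ t, B * w t :=
    integral_mono hw3 (hw.const_mul B) fun t =>
      mul_le_mul_of_nonneg_right (le_of_abs_le (hupp t)) (hwpos t).le
  rw [integral_add (hw.const_mul B) hw2, hsq_eq_deriv2, ← hsecond, norm_mul, norm_pow,
    Complex.norm_real, norm_eq_abs, sq_abs] at hbound
  rw [integral_const_mul] at hB hbound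
  rw [div_mul_eq_mul_div, le_div_iff₀ (by positivity)]
  linarith

lemma norm_integral_prod_le_of_forall_slice {α β E : Type*} [MeasurableSpace α]
    [MeasurableSpace β] [NormedAddCommGroup E] [NormedSpace ℝ E] {μ : Measure α}
    {ν : Measure β} [SigmaFinite μ] [SigmaFinite ν] {f : α × β → E} {g : α × β → ℝ} {C : ℝ}
    (hf : Integrable f (μ.prod ν)) (hg : Integrable g (μ.prod ν))
    (hslice : ∀ b, ‖∫ a, f (a, b) ∂μ‖ ≤ C * ∫ a, g (a, b) ∂μ) :
    ‖∫ z, f z ∂μ.prod ν‖ ≤ C * ∫ z, g z ∂μ.prod ν := by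
  rw [integral_prod_symm f hf, integral_prod_symm g hg, ← integral_const_mul]
  exact (norm_integral_le_integral_norm _).trans
    (integral_mono hf.integral_prod_right.norm (hg.integral_prod_right.const_mul C) hslice)

lemma exists_measurePreserving_coord_split {ι : Type*} [Fintype ι] [DecidableEq ι] (x : ι) :
    ∃ e : (ι → ℝ) ≃ᵐ ℝ × ({i // i ≠ x} → ℝ), MeasurePreserving e volume (volume.prod volume) ∧
      ∀ t r, e.symm (t, r) = e.symm (0, r) + t • Pi.single x 1 := by
  let e : (ι → ℝ) ≃ᵐ ℝ × ({i // i ≠ x} → ℝ) :=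
    (MeasurableEquiv.piEquivPiSubtypeProd (fun _ => ℝ) (· = x)).trans
      (MeasurableEquiv.prodCongr (MeasurableEquiv.funUnique _ ℝ) (MeasurableEquiv.refl _))
  have he (t : ℝ) (r : {i // i ≠ x} → ℝ) (i : ι) :
      e.symm (t, r) i = if h : i = x then t else r ⟨i, h⟩ := rfl
  refine ⟨e, ?_, fun t r => funext fun i => ?_⟩
  · have h1 := volume_preserving_piEquivPiSubtypeProd (fun _ : ι => ℝ) (· = x)
    have h2 := (volume_preserving_funUnique {i // i = x} ℝ).prod
      (MeasurePreserving.id (volume : Measure ({i // i ≠ x} → ℝ)))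
    rw [Measure.volume_eq_prod,
      Subsingleton.elim (Subtype.fintype (· = x)) Unique.fintype] at h1
    exact h2.comp h1
  · rcases eq_or_ne i x with rfl | hi
    · simp [he]
    · simp [he, hi]

lemma norm_integral_le_of_forall_line {ι E : Type*} [Fintype ι] [DecidableEq ι]
    [NormedAddCommGroup E] [NormedSpace ℝ E] (x : ι) {f : (ι → ℝ) → E} {g : (ι → ℝ) → ℝ}
    {C : ℝ} (hf : Integrable f) (hg : Integrable g)
    (hline : ∀ θ, ‖∫ t : ℝ, f (θ + t • Pi.single x 1)‖ ≤ C * ∫ t : ℝ, g (θ + t • Pi.single x 1)) :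
    ‖∫ θ, f θ‖ ≤ C * ∫ θ, g θ := by
  obtain ⟨e, he, he_line⟩ := exists_measurePreserving_coord_split x
  rw [← he.symm.integral_comp' f, ← he.symm.integral_comp' g]
  refine norm_integral_prod_le_of_forall_slice
    ((he.symm.integrable_comp_emb e.symm.measurableEmbedding).2 hf)
    ((he.symm.integrable_comp_emb e.symm.measurableEmbedding).2 hg) fun r => ?_
  have hf_line (t : ℝ) : f (e.symm (t, r)) = f (e.symm (0, r) + t • Pi.single x 1) := by
    rw [he_line t r]
  have hg_line (t : ℝ) : g (e.symm (t, r)) = g (e.symm (0, r) + t • Pi.single x 1) := by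
    rw [he_line t r]
  simpa only [hf_line, hg_line] using hline (e.symm (0, r))

lemma hasDerivAt_comp_add_smul {E F : Type*} [NormedAddCommGroup E] [NormedSpace ℝ E]
    [NormedAddCommGroup F] [NormedSpace ℝ F] {G : E → F} (hG : Differentiable ℝ G) (θ v : E)
    (t : ℝ) : HasDerivAt (fun s : ℝ => G (θ + s • v)) (fderiv ℝ G (θ + t • v) v) t := by
  have : HasDerivAt (fun s : ℝ => θ + s • v) v t := by
    simpa using ((hasDerivAt_id t).smul_const v).const_add θ
  exact (hG _).hasFDerivAt.comp_hasDerivAt t this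

theorem stmt12_general {ι : Type*} [Fintype ι] [DecidableEq ι] (x y : ι) (hxy : x ≠ y)
    (k : ℝ) (hk : k ≠ 0) (H : (ι → ℝ) → ℝ) (hH : ContDiff ℝ 2 H)
    (δ : ℝ) (hδ : 0 < δ)
    (hconv : ∀ a v : ι → ℝ, δ * ∑ i, (v i) ^ 2 ≤ fderiv ℝ (fderiv ℝ H) a v v)
    (B : ℝ)
    (hB2 : ∀ a : ι → ℝ,
      |fderiv ℝ (fun b => fderiv ℝ H b (Pi.single x 1)) a (Pi.single x 1)| ≤ B)
    (hint : Integrable (fun θ => exp (-H θ)) (volume : Measure (ι → ℝ))) :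
    ‖(∫ θ : ι → ℝ, Complex.exp (Complex.I * k * ((θ y : ℂ) - (θ x : ℂ))) * exp (-H θ)) /
        ((∫ θ : ι → ℝ, exp (-H θ) : ℝ) : ℂ)‖ ≤ 2 * B / k ^ 2 := by
  set v : ι → ℝ := Pi.single x 1
  set F : (ι → ℝ) → ℂ := fun θ => cexp (I * k * ((θ y : ℂ) - (θ x : ℂ)))
  have hF (θ : ι → ℝ) : ‖F θ‖ = 1 := by simp [F, Complex.norm_exp]
  have hF_line (θ : ι → ℝ) (t : ℝ) : F (θ + t • v) = F θ * cexp (-(I * k * t)) := by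
    simp only [F, v, ← Complex.exp_add, Pi.add_apply, Pi.smul_apply, Pi.single_eq_same,
      Pi.single_eq_of_ne hxy.symm, smul_eq_mul, mul_zero, mul_one, add_zero]
    congr 1
    push_cast
    ring
  have hH1 : Differentiable ℝ H := hH.differentiable (by norm_num)
  have hH2 : Differentiable ℝ (fderiv ℝ H) :=
    (hH.fderiv_right (m := 1) le_rfl).differentiable one_ne_zero
  have hH2v : Differentiable ℝ fun b => fderiv ℝ H b v := fun a =>
    (hH2 a).clm_apply (differentiableAt_const v)
  have hD2 (a : ι → ℝ) :
      fderiv ℝ (fun b => fderiv ℝ H b v) a v = fderiv ℝ (fderiv ℝ H) a v v := by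
    rw [fderiv_clm_apply (hH2 a) (differentiableAt_const v)]
    simp
  have hv : ∑ i, v i ^ 2 = 1 := by simp [v, Pi.single_apply]
  have hZ : 0 < ∫ θ, exp (-H θ) := integral_exp_pos hint
  rw [norm_div, Complex.norm_real, norm_of_nonneg hZ.le, div_le_iff₀ hZ]
  refine norm_integral_le_of_forall_line x
    (hint.ofReal.bdd_mul (by fun_prop) (ae_of_all _ fun θ => (hF θ).le)) hint fun θ => ?_
  have hd1 := hasDerivAt_comp_add_smul hH1 θ v
  have hd2 := hasDerivAt_comp_add_smul hH2v θ v
  have hlow (t : ℝ) : δ ≤ fderiv ℝ (fun b => fderiv ℝ H b v) (θ + t • v) v := by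
    simpa [hD2, hv] using hconv (θ + t • v) v
  have hupp (t : ℝ) := hB2 (θ + t • v)
  change ‖∫ t : ℝ, F (θ + t • v) * exp (-H (θ + t • v))‖ ≤ _
  simp only [hF_line, mul_assoc (F θ)]
  rw [integral_const_mul, norm_mul, hF, one_mul]
  exact norm_integral_cexp_mul_exp_neg_le hk hd1 hd2 hupp
    (integrable_exp_neg_of_le_deriv2 hδ hd1 hd2 hlow)
    (integrable_sq_deriv_mul_exp_neg_of_le_deriv2 hδ hd1 hd2 hlow hupp)

/-- Decay estimate (c13): for `F_k(θ) = e^{ik(θ(y)-θ(x))}` with `k ≠ 0`, `H` uniformly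
convex with `|∂²H/∂θ(x)²| ≤ B`, one has `|⟨F_k⟩_H| ≤ 2B/k²`. -/
theorem stmt12 {ι : Type*} [Fintype ι] [DecidableEq ι] (x y : ι) (hxy : x ≠ y)
    (k : ℝ) (hk : k ≠ 0) (H : (ι → ℝ) → ℝ) (hH : ContDiff ℝ 2 H)
    (δ : ℝ) (hδ : 0 < δ)
    (hconv : ∀ a v : ι → ℝ, δ * ∑ i, (v i) ^ 2 ≤ fderiv ℝ (fderiv ℝ H) a v v)
    (B : ℝ) (hB : 0 ≤ B)
    (hB2 : ∀ a : ι → ℝ,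
      |fderiv ℝ (fun b => fderiv ℝ H b (Pi.single x 1)) a (Pi.single x 1)| ≤ B)
    (hint : Integrable (fun θ => exp (-H θ)) (volume : Measure (ι → ℝ))) :
    ‖(∫ θ : ι → ℝ, Complex.exp (Complex.I * k * ((θ y : ℂ) - (θ x : ℂ))) * exp (-H θ)) /
        ((∫ θ : ι → ℝ, exp (-H θ) : ℝ) : ℂ)‖ ≤ 2 * B / k ^ 2 :=
  stmt12_general x y hxy k hk H hH δ hδ hconv B hB2 hint
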